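/- Let M be a real symmetric positive definite n×n matrix, A a real n×n matrix, and μ ∈ ℝ with AᵀM + MA + μM ⪯ 0. Then for every t ≥ 0 and every v ∈ ℝⁿ: (exp(tA) v)ᵀ M (exp(tA) v) ≤ e^{−μt} vᵀ M v, where exp(tA) is the matrix exponential of tA. -/

import Mathlib

/-!
Along the flow x(u) = exp(uA) v we have x' = A x, so the quadratic form q(u) = x(u)ᵀ M x(u) satisfies
q' = xᵀ (AᵀM + MA) x ≤ -μ q by the LMI. Hence e^{μu} q(u) is antitone, which is the claim.
-/

open Matrix NormedSpace

section
variable {𝕜 : Type*} [NontriviallyNormedField 𝕜] {ι : Type*} [Fintype ι]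

theorem HasDerivAt.dotProduct {f g : 𝕜 → ι → 𝕜} {f' g' : ι → 𝕜} {t : 𝕜}
    (hf : HasDerivAt f f' t) (hg : HasDerivAt g g' t) :
    HasDerivAt (fun u => f u ⬝ᵥ g u) (f' ⬝ᵥ g t + f t ⬝ᵥ g') t := by
  simp only [_root_.dotProduct, ← Finset.sum_add_distrib]
  exact HasDerivAt.fun_sum fun i _ => (hasDerivAt_pi.1 hf i).mul (hasDerivAt_pi.1 hg i)

theorem HasDerivAt.mulVec {κ : Type*} (M : Matrix κ ι 𝕜) {f : 𝕜 → ι → 𝕜} {f' : ι → 𝕜} {t : 𝕜}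
    (hf : HasDerivAt f f' t) :
    HasDerivAt (fun u => M *ᵥ f u) (M *ᵥ f') t :=
  hasDerivAt_pi.2 fun i => by
    simpa only [Matrix.mulVec, _root_.dotProduct] using
      HasDerivAt.fun_sum fun j _ => (hasDerivAt_pi.1 hf j).const_mul (M i j)

end

theorem Matrix.hasDerivAt_exp_smul_mulVec {ι : Type*} [Fintype ι] [DecidableEq ι]
    (A : Matrix ι ι ℝ) (v : ι → ℝ) (t : ℝ) :
    HasDerivAt (fun u : ℝ => exp (u • A) *ᵥ v) (A *ᵥ (exp (t • A) *ᵥ v)) t := by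
  -- `NormedSpace.exp` does not depend on the norm, so any Banach algebra structure will do.
  let := Matrix.linftyOpNormedRing (n := ι) (α := ℝ)
  let := Matrix.linftyOpNormedAlgebra (n := ι) (R := ℝ) (α := ℝ)
  let applyTo : Matrix ι ι ℝ →L[ℝ] ι → ℝ :=
    ((LinearMap.applyₗ v).comp Matrix.toLin'.toLinearMap).toContinuousLinearMap
  rw [mulVec_mulVec]
  exact applyTo.hasFDerivAt.comp_hasDerivAt t (hasDerivAt_exp_smul_const' A t)

theorem Matrix.mulVec_dotProduct_mulVec_add_dotProduct_mulVec_mulVec {R ι : Type*} [CommRing R]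
    [Fintype ι] (A M : Matrix ι ι R) (w : ι → R) :
    A *ᵥ w ⬝ᵥ M *ᵥ w + w ⬝ᵥ M *ᵥ (A *ᵥ w) = w ⬝ᵥ (Aᵀ * M + M * A) *ᵥ w := by
  rw [add_mulVec, dotProduct_add, ← mulVec_mulVec, ← mulVec_mulVec, dotProduct_mulVec w Aᵀ,
    vecMul_transpose]

theorem le_exp_mul_mul_of_hasDerivAt_le_mul {f f' : ℝ → ℝ} {K : ℝ}
    (hf : ∀ u, HasDerivAt f (f' u) u) (hf' : ∀ u, f' u ≤ K * f u) {t : ℝ} (ht : 0 ≤ t) :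
    f t ≤ Real.exp (K * t) * f 0 := by
  have hdamped : ∀ u, HasDerivAt (fun u => Real.exp (-K * u) * f u)
      (Real.exp (-K * u) * (f' u - K * f u)) u := fun u =>
    ((((hasDerivAt_id' u).const_mul (-K)).exp).fun_mul (hf u)).congr_deriv (by ring)
  have hanti : Antitone fun u => Real.exp (-K * u) * f u :=
    antitone_of_hasDerivAt_nonpos hdamped fun u =>
      mul_nonpos_of_nonneg_of_nonpos (Real.exp_pos _).le (by linarith [hf' u])
  calc f t = Real.exp (K * t) * (Real.exp (-K * t) * f t) := by
        rw [← mul_assoc, ← Real.exp_add]; simp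
    _ ≤ Real.exp (K * t) * f 0 := by
        simpa using mul_le_mul_of_nonneg_left (hanti ht) (Real.exp_pos (K * t)).le

theorem stmt_5_general {n : ℕ} (M A : Matrix (Fin n) (Fin n) ℝ) (μ : ℝ)
    (hLMI : ∀ v : Fin n → ℝ, v ⬝ᵥ (Aᵀ * M + M * A + μ • M).mulVec v ≤ 0) :
    ∀ (t : ℝ), 0 ≤ t → ∀ (v : Fin n → ℝ),
      (NormedSpace.exp (t • A)).mulVec v ⬝ᵥ M.mulVec ((NormedSpace.exp (t • A)).mulVec v)
        ≤ Real.exp (-μ * t) * (v ⬝ᵥ M.mulVec v) := by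
  intro t ht v
  have hflow := hasDerivAt_exp_smul_mulVec A v
  have hquad : ∀ u, HasDerivAt (fun u => exp (u • A) *ᵥ v ⬝ᵥ M *ᵥ (exp (u • A) *ᵥ v))
      (exp (u • A) *ᵥ v ⬝ᵥ (Aᵀ * M + M * A) *ᵥ (exp (u • A) *ᵥ v)) u := fun u => by
    rw [← mulVec_dotProduct_mulVec_add_dotProduct_mulVec_mulVec]
    exact (hflow u).dotProduct ((hflow u).mulVec M)
  have hdecay : ∀ u : ℝ, exp (u • A) *ᵥ v ⬝ᵥ (Aᵀ * M + M * A) *ᵥ (exp (u • A) *ᵥ v)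
      ≤ -μ * (exp (u • A) *ᵥ v ⬝ᵥ M *ᵥ (exp (u • A) *ᵥ v)) := fun u => by
    have := hLMI (exp (u • A) *ᵥ v)
    rw [add_mulVec, dotProduct_add, smul_mulVec, dotProduct_smul, smul_eq_mul] at this
    linarith
  simpa using le_exp_mul_mul_of_hasDerivAt_le_mul hquad hdecay ht

/-- Under the LMI AᵀM + MA + μM ⪯ 0, the matrix exponential of tA contracts the
M-quadratic form: (exp(tA) v)ᵀ M (exp(tA) v) ≤ e^{−μt} vᵀ M v for all t ≥ 0. -/
theorem stmt_5 {n : ℕ} (M A : Matrix (Fin n) (Fin n) ℝ) (μ : ℝ)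
    (hMsym : M = Mᵀ)
    (hMpd : ∀ v : Fin n → ℝ, v ≠ 0 → 0 < v ⬝ᵥ M.mulVec v)
    (hLMI : ∀ v : Fin n → ℝ, v ⬝ᵥ (Aᵀ * M + M * A + μ • M).mulVec v ≤ 0) :
    ∀ (t : ℝ), 0 ≤ t → ∀ (v : Fin n → ℝ),
      (NormedSpace.exp (t • A)).mulVec v ⬝ᵥ M.mulVec ((NormedSpace.exp (t • A)).mulVec v)
        ≤ Real.exp (-μ * t) * (v ⬝ᵥ M.mulVec v) :=
  stmt_5_general M A μ hLMI
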